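/- arXiv:2604.22236 — 2 statements merged into one kernel-verified Lean document; each statement's English description precedes it below -/
import Mathlib

section
/- Under the stability assumption and proportional bandwidth k_d/d → α ∈ (0,1), the asymptotic normalized risk of optimal fixed highlighting (revealing the k_d coordinates with the largest p*_{d,(j)}), which is the same for naive and sophisticated agents and equals E[(1/d) Σ_{j=1}^{d−k_d} (X*_{d,(j)} − p*_{d,(j)})²] = (1/d) Σ_{j=1}^{d−k_d} p*_{d,(j)}(1 − p*_{d,(j)}), converges as d → ∞ to ∫_0^{1−α} Q*(q)(1 − Q*(q)) dq. -/
/-!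
Each summand of the risk is the variance of a Bernoulli variable: folding `X ↦ 1 - X` when
`p > 1/2` only flips the sign of `X - p`, and `p* (1 - p*) = p (1 - p)`.

For the limit, the risk is the integral of the step function equal to
`v(p*_{d,(⌊qd⌋)})` on `[0, (d - k_d)/d)`, with `v(x) = x (1 - x)`, and dominated convergence
applies once `p*_{d,(⌊qd⌋)} → Q*(q)` for almost every `q`. The sorted values satisfy
`p*_{d,(j)} ≤ t ↔ j < d F*_d(t)`, where `F*_d(t) = F_d(t) + 1 - F_d((1 - t)⁻)` is the empirical
cdf of the `p*`; it tends to `F*(t)` for the dense set of `t < 1/2` at which `F` is continuous at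
`t` and `1 - t`. Squeezing `⌊qd⌋` between such counts gives the convergence at every point of
right continuity of the monotone function `Q*`, i.e. outside a countable set.
-/

open Finset MeasureTheory ProbabilityTheory Filter Topology

section Bernoulli

variable {Ω : Type*} {Y : Ω → ℝ}

lemma sq_sub_eq_of_bernoulli (h01 : ∀ ω, Y ω = 0 ∨ Y ω = 1) (c : ℝ) :
    (fun ω => (Y ω - c) ^ 2) = fun ω => c ^ 2 + (1 - 2 * c) * {ω | Y ω = 1}.indicator 1 ω := by
  funext ω
  rcases h01 ω with h | h
  · simp [h]
  · simp [h]
    ring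

variable [MeasurableSpace Ω] {μ : Measure Ω} [IsProbabilityMeasure μ]

lemma integrable_sq_sub_of_bernoulli (hY : Measurable Y) (h01 : ∀ ω, Y ω = 0 ∨ Y ω = 1)
    (c : ℝ) : Integrable (fun ω => (Y ω - c) ^ 2) μ := by
  rw [sq_sub_eq_of_bernoulli h01]
  exact (integrable_const _).add
    (((integrable_const 1).indicator (hY (measurableSet_singleton 1))).const_mul _)

lemma integral_sq_sub_of_bernoulli (hY : Measurable Y) (h01 : ∀ ω, Y ω = 0 ∨ Y ω = 1) {c : ℝ}
    (hc : 0 ≤ c) (hμ : μ {ω | Y ω = 1} = ENNReal.ofReal c) :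
    ∫ ω, (Y ω - c) ^ 2 ∂μ = c * (1 - c) := by
  have hA : MeasurableSet {ω | Y ω = 1} := hY (measurableSet_singleton 1)
  rw [sq_sub_eq_of_bernoulli h01, integral_add (integrable_const _)
    (((integrable_const 1).indicator hA).const_mul _), integral_const_mul,
    integral_indicator_one hA, measureReal_def, hμ, ENNReal.toReal_ofReal hc, integral_const,
    probReal_univ, smul_eq_mul, one_mul]
  ring

end Bernoulli

lemma sq_ite_sub_min (x p : ℝ) :
    ((if p ≤ 1 / 2 then x else 1 - x) - min p (1 - p)) ^ 2 = (x - p) ^ 2 := by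
  split_ifs with h
  · rw [min_eq_left (by linarith)]
  · rw [min_eq_right (by linarith)]
    ring

lemma min_mul_one_sub_min (p : ℝ) : min p (1 - p) * (1 - min p (1 - p)) = p * (1 - p) := by
  rcases le_total p (1 - p) with h | h
  · rw [min_eq_left h]
  · rw [min_eq_right h]
    ring

lemma min_one_sub_mem_Icc {p : ℝ} (hp : p ∈ Set.Icc 0 1) : min p (1 - p) ∈ Set.Icc 0 (1 / 2) :=
  ⟨le_min hp.1 (by linarith [hp.2]), min_le_iff.2 (by by_contra! h; linarith)⟩

lemma abs_mul_one_sub_le_one {x : ℝ} (hx : x ∈ Set.Icc 0 1) : |x * (1 - x)| ≤ 1 := by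
  rw [abs_le]
  constructor <;> nlinarith [hx.1, hx.2]

lemma integral_const_mul_sum_sq_fold_sub {Ω ι : Type*} [MeasurableSpace Ω] {μ : Measure Ω}
    [IsProbabilityMeasure μ] (s : Finset ι) (c : ℝ) {Y : ι → Ω → ℝ} {p : ι → ℝ}
    (hY : ∀ i, Measurable (Y i)) (h01 : ∀ i ω, Y i ω = 0 ∨ Y i ω = 1)
    (hp : ∀ i ∈ s, 0 ≤ p i) (hμ : ∀ i ∈ s, μ {ω | Y i ω = 1} = ENNReal.ofReal (p i)) :
    ∫ ω, c * ∑ i ∈ s, ((if p i ≤ 1 / 2 then Y i ω else 1 - Y i ω) - min (p i) (1 - p i)) ^ 2 ∂μ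
      = c * ∑ i ∈ s, min (p i) (1 - p i) * (1 - min (p i) (1 - p i)) := by
  simp_rw [sq_ite_sub_min, min_mul_one_sub_min]
  rw [integral_const_mul, integral_finsetSum _ fun i _ =>
    integrable_sq_sub_of_bernoulli (hY i) (h01 i) _]
  exact congrArg _ (Finset.sum_congr rfl fun i hi =>
    integral_sq_sub_of_bernoulli (hY i) (h01 i) (hp i hi) (hμ i hi))

noncomputable def empiricalCDF (d : ℕ) (a : ℕ → ℝ) (t : ℝ) : ℝ :=
  (1 / (d : ℝ)) * ∑ i ∈ Finset.range d, if a i ≤ t then (1 : ℝ) else 0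

lemma empiricalCDF_eq_card_div (d : ℕ) (a : ℕ → ℝ) (t : ℝ) :
    empiricalCDF d a t = (#{i ∈ Finset.range d | a i ≤ t} : ℝ) / d := by
  rw [empiricalCDF, Finset.sum_boole, one_div_mul_eq_div]

lemma empiricalCDF_comp_of_bijOn {d : ℕ} {σ : ℕ → ℕ} (hσ : Set.BijOn σ (Set.Iio d) (Set.Iio d))
    (a : ℕ → ℝ) (t : ℝ) : empiricalCDF d (a ∘ σ) t = empiricalCDF d a t := by
  rw [empiricalCDF, empiricalCDF]
  congr 1
  refine Finset.sum_nbij σ (fun i hi => ?_) ?_ ?_ fun _ _ => rfl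
  · simpa using hσ.mapsTo (Finset.mem_range.mp hi)
  · simpa using hσ.injOn
  · simpa using hσ.surjOn

lemma empiricalCDF_eq_zero {d : ℕ} {a : ℕ → ℝ} {t : ℝ} (h : ∀ i < d, t < a i) :
    empiricalCDF d a t = 0 := by
  rw [empiricalCDF, Finset.sum_eq_zero fun i hi => if_neg (h i (Finset.mem_range.mp hi)).not_ge,
    mul_zero]

lemma empiricalCDF_eq_one {d : ℕ} (hd : d ≠ 0) {a : ℕ → ℝ} {t : ℝ} (h : ∀ i < d, a i ≤ t) :
    empiricalCDF d a t = 1 := by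
  rw [empiricalCDF, Finset.sum_congr rfl fun i hi => if_pos (h i (Finset.mem_range.mp hi))]
  simp [hd]

lemma empiricalCDF_min (d : ℕ) {a b : ℕ → ℝ} {t : ℝ} (h : ∀ i < d, ¬(a i ≤ t ∧ b i ≤ t)) :
    empiricalCDF d (fun i => min (a i) (b i)) t = empiricalCDF d a t + empiricalCDF d b t := by
  simp only [empiricalCDF, ← mul_add, ← Finset.sum_add_distrib]
  congr 1
  refine Finset.sum_congr rfl fun i hi => ?_
  have := h i (Finset.mem_range.mp hi)
  by_cases ha : a i ≤ t <;> by_cases hb : b i ≤ t <;> simp [ha, hb] at this ⊢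

lemma one_le_empiricalCDF_add_empiricalCDF_one_sub {d : ℕ} (hd : d ≠ 0) (a : ℕ → ℝ) (s : ℝ) :
    1 ≤ empiricalCDF d a s + empiricalCDF d (fun i => 1 - a i) (1 - s) := by
  rw [empiricalCDF, empiricalCDF, ← mul_add, ← Finset.sum_add_distrib]
  calc (1 : ℝ) = (1 / (d : ℝ)) * ∑ _i ∈ Finset.range d, (1 : ℝ) := by simp [hd]
    _ ≤ _ := by
      gcongr with i
      split_ifs <;> linarith

lemma empiricalCDF_add_empiricalCDF_one_sub_le (d : ℕ) (a : ℕ → ℝ) {s s' : ℝ} (hs : s' < s) :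
    empiricalCDF d a s' + empiricalCDF d (fun i => 1 - a i) (1 - s) ≤ 1 := by
  rw [empiricalCDF, empiricalCDF, ← mul_add, ← Finset.sum_add_distrib]
  calc _ ≤ (1 / (d : ℝ)) * ∑ _i ∈ Finset.range d, (1 : ℝ) := by
        gcongr with i
        split_ifs <;> linarith
    _ ≤ 1 := by
      rcases eq_or_ne d 0 with rfl | hd
      · simp
      · simp [hd]

/-- The proportion of `a i ≥ s` lies between `1 - F_d(s)` and `1 - F_d(s')` for every `s' < s`;
left continuity of `F` at `s` closes the gap. -/
lemma tendsto_empiricalCDF_one_sub {a : ℕ → ℕ → ℝ} {F : ℝ → ℝ} {s : ℝ}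
    (hF : ContinuousWithinAt F (Set.Iio s) s)
    (hs : Tendsto (fun d => empiricalCDF d (a d) s) atTop (𝓝 (F s)))
    (hleft : ∃ᶠ s' in 𝓝[<] s, Tendsto (fun d => empiricalCDF d (a d) s') atTop (𝓝 (F s'))) :
    Tendsto (fun d => empiricalCDF d (fun i => 1 - a d i) (1 - s)) atTop (𝓝 (1 - F s)) := by
  rw [tendsto_order]
  refine ⟨fun l hl => ?_, fun u hu => ?_⟩
  · filter_upwards [hs.eventually (gt_mem_nhds (show F s < 1 - l by linarith)),
      eventually_ne_atTop 0] with d hd hd0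
    linarith [one_le_empiricalCDF_add_empiricalCDF_one_sub hd0 (a d) s]
  · obtain ⟨s', hlim, hs', hFs'⟩ := (hleft.and_eventually (eventually_mem_nhdsWithin.and
      (hF.eventually (lt_mem_nhds (show 1 - u < F s by linarith))))).exists
    filter_upwards [hlim.eventually (lt_mem_nhds hFs')] with d hd
    linarith [empiricalCDF_add_empiricalCDF_one_sub_le d (a d) (Set.mem_Iio.mp hs')]

lemma le_iff_lt_card_of_sorted {d : ℕ} {a : ℕ → ℝ} (ha : ∀ j j', j ≤ j' → j' < d → a j ≤ a j')
    {j : ℕ} (hj : j < d) (t : ℝ) : a j ≤ t ↔ j < #{i ∈ Finset.range d | a i ≤ t} := by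
  constructor
  · intro h
    calc j < #(Finset.range (j + 1)) := by simp
      _ ≤ _ := Finset.card_le_card fun i hi => by
        have hij : i ≤ j := Nat.lt_succ_iff.mp (Finset.mem_range.mp hi)
        simpa using ⟨by omega, (ha i j hij hj).trans h⟩
  · intro h
    by_contra h'
    have : #{i ∈ Finset.range d | a i ≤ t} ≤ #(Finset.range j) :=
      Finset.card_le_card fun i hi => by
        simp only [Finset.mem_filter, Finset.mem_range] at hi ⊢
        by_contra hji
        exact h' ((ha j i (not_lt.mp hji) hi.1).trans hi.2)
    simp only [Finset.card_range] at this
    omega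

theorem tendsto_sorted_apply_floor {a : ℕ → ℕ → ℝ}
    (ha : ∀ d j j', j ≤ j' → j' < d → a d j ≤ a d j') {q x : ℝ} (hq : q ∈ Set.Ico 0 1)
    (hlow : ∀ l < x, ∃ t ≥ l, ∃ c < q, Tendsto (fun d => empiricalCDF d (a d) t) atTop (𝓝 c))
    (hup : ∀ u > x, ∃ t < u, ∃ c > q, Tendsto (fun d => empiricalCDF d (a d) t) atTop (𝓝 c)) :
    Tendsto (fun d => a d ⌊q * d⌋₊) atTop (𝓝 x) := by
  rw [tendsto_order]
  refine ⟨fun l hl => ?_, fun u hu => ?_⟩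
  · obtain ⟨t, hlt, c, hc, hconv⟩ := hlow l hl
    filter_upwards [hconv.eventually (gt_mem_nhds hc), eventually_ne_atTop 0] with d hd hd0
    have hd_pos : (0 : ℝ) < d := by positivity
    rw [empiricalCDF_eq_card_div, div_lt_iff₀ hd_pos] at hd
    have hfloor : ⌊q * d⌋₊ < d :=
      (Nat.floor_lt (mul_nonneg hq.1 d.cast_nonneg)).2 (by nlinarith [hq.2])
    have : ¬a d ⌊q * d⌋₊ ≤ t := by
      rw [le_iff_lt_card_of_sorted (ha d) hfloor, not_lt]
      exact Nat.le_floor hd.le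
    linarith
  · obtain ⟨t, htu, c, hc, hconv⟩ := hup u hu
    filter_upwards [hconv.eventually (lt_mem_nhds hc), eventually_ne_atTop 0] with d hd hd0
    rw [empiricalCDF_eq_card_div, lt_div_iff₀ (by positivity)] at hd
    have hlt : ⌊q * d⌋₊ < #{i ∈ Finset.range d | a d i ≤ t} :=
      (Nat.floor_lt (mul_nonneg hq.1 d.cast_nonneg)).2 hd
    have hle : #{i ∈ Finset.range d | a d i ≤ t} ≤ d :=
      (Finset.card_filter_le _ _).trans (Finset.card_range d).le
    exact ((le_iff_lt_card_of_sorted (ha d) (hlt.trans_le hle) t).2 hlt).trans_lt htu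

lemma frequently_nhdsLT_notMem {C : Set ℝ} (hC : C.Countable) (a : ℝ) :
    ∃ᶠ x in 𝓝[<] a, x ∉ C := by
  rw [Filter.frequently_iff]
  intro U hU
  obtain ⟨l, hl, hlU⟩ := mem_nhdsLT_iff_exists_Ioo_subset.1 hU
  obtain ⟨x, hxC, hx⟩ := (hC.dense_compl ℝ).exists_between hl
  exact ⟨x, hlU hx, hxC⟩

lemma exists_tendsto_empiricalCDF_min_one_sub {p : ℕ → ℕ → ℝ} {F : ℝ → ℝ}
    (hF : MonotoneOn F (Set.Icc 0 1))
    (hstab : ∀ t ∈ Set.Icc (0 : ℝ) 1, ContinuousWithinAt F (Set.Icc 0 1) t →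
      Tendsto (fun d => empiricalCDF d (p d) t) atTop (𝓝 (F t)))
    {l r : ℝ} (hl : 0 ≤ l) (hlr : l < r) (hr : r ≤ 1 / 2) :
    ∃ t ∈ Set.Ioo l r, Tendsto (fun d => empiricalCDF d (fun i => min (p d i) (1 - p d i)) t)
      atTop (𝓝 (F t + 1 - F (1 - t))) := by
  set C := {x ∈ Set.Icc 0 1 | ¬ContinuousWithinAt F (Set.Icc 0 1) x}
  have hC : C.Countable := hF.countable_not_continuousWithinAt
  have hgood : ∀ x ∈ Set.Ioo (0 : ℝ) 1, x ∉ C →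
      Tendsto (fun d => empiricalCDF d (p d) x) atTop (𝓝 (F x)) ∧ ContinuousAt F x := by
    intro x hx hxC
    have hcont : ContinuousWithinAt F (Set.Icc 0 1) x :=
      not_not.mp fun h => hxC ⟨Set.Ioo_subset_Icc_self hx, h⟩
    exact ⟨hstab x (Set.Ioo_subset_Icc_self hx) hcont, hcont.continuousAt (Icc_mem_nhds hx.1 hx.2)⟩
  obtain ⟨t, htC, ht⟩ := ((hC.union (hC.image fun x => 1 - x)).dense_compl ℝ).exists_between hlr
  simp only [Set.mem_compl_iff, Set.mem_union, not_or, Set.mem_image] at htC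
  have ht0 : 0 < t := hl.trans_lt ht.1
  have ht2 : t < 1 / 2 := ht.2.trans_le hr
  have h1t : 1 - t ∉ C := fun h => htC.2 ⟨1 - t, h, sub_sub_cancel 1 t⟩
  have hleft : ∃ᶠ s in 𝓝[<] (1 - t),
      Tendsto (fun d => empiricalCDF d (p d) s) atTop (𝓝 (F s)) :=
    ((frequently_nhdsLT_notMem hC (1 - t)).and_eventually
      (Ioo_mem_nhdsLT (by linarith : (0 : ℝ) < 1 - t))).mono fun s ⟨hsC, hs⟩ =>
        (hgood s ⟨hs.1, by linarith [hs.2]⟩ hsC).1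
  have h1t' := hgood (1 - t) ⟨by linarith, by linarith⟩ h1t
  have hsplit : ∀ d, empiricalCDF d (fun i => min (p d i) (1 - p d i)) t =
      empiricalCDF d (p d) t + empiricalCDF d (fun i => 1 - p d i) (1 - (1 - t)) := fun d => by
    rw [sub_sub_cancel]
    exact empiricalCDF_min d fun i _ h => by linarith [h.1, h.2]
  refine ⟨t, ht, ?_⟩
  simp_rw [hsplit, add_sub_assoc]
  exact (hgood t ⟨ht0, by linarith⟩ htC.1).1.add
    (tendsto_empiricalCDF_one_sub h1t'.2.continuousWithinAt h1t'.1 hleft)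

noncomputable def quantile (G : ℝ → ℝ) (q : ℝ) : ℝ :=
  sInf {t | t ∈ Set.Icc (0 : ℝ) 1 ∧ q ≤ G t}

section Quantile

variable {G : ℝ → ℝ} {q t : ℝ}

lemma quantile_le (ht : t ∈ Set.Icc 0 1) (hq : q ≤ G t) : quantile G q ≤ t :=
  csInf_le ⟨0, fun _ hs => hs.1.1⟩ ⟨ht, hq⟩

lemma lt_of_lt_quantile (ht : t ∈ Set.Icc 0 1) (h : t < quantile G q) : G t < q :=
  lt_of_not_ge fun hq => (quantile_le ht hq).not_gt h

lemma le_quantile (hq : q ≤ G 1) (h : ∀ s ∈ Set.Icc (0 : ℝ) 1, q ≤ G s → t ≤ s) :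
    t ≤ quantile G q :=
  le_csInf ⟨1, ⟨zero_le_one, le_rfl⟩, hq⟩ fun s hs => h s hs.1 hs.2

lemma quantile_nonneg (hq : q ≤ G 1) : 0 ≤ quantile G q :=
  le_quantile hq fun _ hs _ => hs.1

lemma quantile_monotoneOn : MonotoneOn (quantile G) (Set.Iic (G 1)) :=
  fun _ _ _ hq' hqq' => le_quantile hq' fun _ hs hs' => quantile_le hs (hqq'.trans hs')

lemma countable_not_continuousWithinAt_quantile :
    {q | q < G 1 ∧ ¬ContinuousWithinAt (quantile G) (Set.Ioi q) q}.Countable := by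
  refine (quantile_monotoneOn (G := G)).countable_not_continuousWithinAt_Ioi.mono ?_
  rintro q ⟨hq, hc⟩
  rw [Set.mem_ofPred_eq, Set.Iic_inter_Ioi, continuousWithinAt_Ioc_iff_Ioi hq]
  exact ⟨hq.le, hc⟩

lemma lt_of_quantile_lt (hG : MonotoneOn G (Set.Icc 0 1)) (hq : q < G 1)
    (hc : ContinuousWithinAt (quantile G) (Set.Ioi q) q) (ht : quantile G q < t) (ht1 : t ≤ 1) :
    q < G t := by
  by_contra! hGt
  have ht0 : 0 ≤ t := (quantile_nonneg hq.le).trans ht.le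
  have hright : ∀ q' ∈ Set.Ioc q (G 1), t ≤ quantile G q' := fun q' hq' =>
    le_quantile hq'.2 fun s hs hs' => by
      by_contra! hst
      linarith [hG hs ⟨ht0, ht1⟩ hst.le, hq'.1]
  have : t ≤ quantile G q :=
    ge_of_tendsto hc (Filter.mem_of_superset (Ioc_mem_nhdsGT hq) hright)
  linarith

end Quantile

theorem tendsto_sorted_apply_floor_quantile {a : ℕ → ℕ → ℝ}
    (ha : ∀ d j j', j ≤ j' → j' < d → a d j ≤ a d j')
    (ha_mem : ∀ d j, j < d → a d j ∈ Set.Icc 0 (1 / 2)) {G : ℝ → ℝ}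
    (hG : MonotoneOn G (Set.Icc 0 1)) (hG_half : G (1 / 2) = 1)
    (hT : ∀ l r : ℝ, 0 ≤ l → l < r → r ≤ 1 / 2 →
      ∃ t ∈ Set.Ioo l r, Tendsto (fun d => empiricalCDF d (a d) t) atTop (𝓝 (G t)))
    {q : ℝ} (hq : q ∈ Set.Ioo 0 1) (hc : ContinuousWithinAt (quantile G) (Set.Ioi q) q) :
    Tendsto (fun d => a d ⌊q * d⌋₊) atTop (𝓝 (quantile G q)) := by
  have hG1 : 1 ≤ G 1 :=
    hG_half.symm.trans_le (hG ⟨by norm_num, by norm_num⟩ ⟨zero_le_one, le_rfl⟩ (by norm_num))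
  have hQ0 : 0 ≤ quantile G q := quantile_nonneg (hq.2.le.trans hG1)
  have hQ_half : quantile G q ≤ 1 / 2 :=
    quantile_le ⟨by norm_num, by norm_num⟩ (by rw [hG_half]; exact hq.2.le)
  refine tendsto_sorted_apply_floor ha ⟨hq.1.le, hq.2⟩ (fun l hl => ?_) (fun u hu => ?_)
  · rcases lt_or_ge l 0 with hl0 | hl0
    · refine ⟨l, le_rfl, 0, hq.1, tendsto_const_nhds.congr fun d => ?_⟩
      exact (empiricalCDF_eq_zero fun i hi => hl0.trans_le (ha_mem d i hi).1).symm
    obtain ⟨t, ht, hlim⟩ := hT l (quantile G q) hl0 hl hQ_half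
    exact ⟨t, ht.1.le, G t, lt_of_lt_quantile ⟨by linarith [ht.1], by linarith [ht.2]⟩ ht.2, hlim⟩
  · rcases lt_or_ge (1 / 2) u with hu2 | hu2
    · refine ⟨1 / 2, hu2, 1, hq.2, tendsto_const_nhds.congr' ?_⟩
      filter_upwards [eventually_ne_atTop 0] with d hd
      exact (empiricalCDF_eq_one hd fun i hi => (ha_mem d i hi).2).symm
    obtain ⟨t, ht, hlim⟩ := hT (quantile G q) u hQ0 hu hu2
    exact ⟨t, ht.2, G t, lt_of_quantile_lt hG (hq.2.trans_le hG1) hc ht.1 (by linarith [ht.2]),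
      hlim⟩

noncomputable def riemannStep (d m : ℕ) (v : ℕ → ℝ) (q : ℝ) : ℝ :=
  ∑ j ∈ Finset.range m, (Set.Ico ((j : ℝ) / d) ((j + 1) / d)).indicator (fun _ => v j) q

section RiemannStep

variable {d m : ℕ} {v : ℕ → ℝ} {q : ℝ}

lemma measurable_riemannStep : Measurable (riemannStep d m v) :=
  Finset.measurable_sum _ fun _ _ => measurable_const.indicator measurableSet_Ico

lemma integral_riemannStep :
    ∫ q, riemannStep d m v q = (1 / (d : ℝ)) * ∑ j ∈ Finset.range m, v j := by
  have hint : ∀ j : ℕ, Integrable ((Set.Ico ((j : ℝ) / d) ((j + 1) / d)).indicator fun _ => v j) :=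
    fun j => (integrable_indicator_iff measurableSet_Ico).2
      (integrableOn_const (by simp [Real.volume_Ico]))
  unfold riemannStep
  rw [integral_finsetSum _ fun j _ => hint j, Finset.mul_sum]
  refine Finset.sum_congr rfl fun j _ => ?_
  rw [integral_indicator measurableSet_Ico, setIntegral_const, measureReal_def, Real.volume_Ico,
    show ((j : ℝ) + 1) / d - j / d = 1 / d by ring, ENNReal.toReal_ofReal (by positivity),
    smul_eq_mul, mul_comm]

lemma riemannStep_of_neg (hq : q < 0) : riemannStep d m v q = 0 :=
  Finset.sum_eq_zero fun j _ =>
    Set.indicator_of_notMem (fun h => (h.1.trans_lt hq).not_ge (by positivity)) _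

lemma riemannStep_of_nonneg (hd : d ≠ 0) (hq : 0 ≤ q) :
    riemannStep d m v q = if q * d < m then v ⌊q * d⌋₊ else 0 := by
  have hd' : (0 : ℝ) < d := by positivity
  have hmem : ∀ j : ℕ, q ∈ Set.Ico ((j : ℝ) / d) ((j + 1) / d) ↔ ⌊q * d⌋₊ = j := fun j => by
    rw [Nat.floor_eq_iff (by positivity), Set.mem_Ico, div_le_iff₀ hd', lt_div_iff₀ hd']
  unfold riemannStep
  simp_rw [Set.indicator_apply, hmem]
  rw [Finset.sum_ite_eq]
  simp only [Finset.mem_range, Nat.floor_lt (mul_nonneg hq d.cast_nonneg)]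

lemma abs_riemannStep_le {C : ℝ} (hm : m ≤ d) (hC : 0 ≤ C) (hv : ∀ j < m, |v j| ≤ C) :
    |riemannStep d m v q| ≤ (Set.Icc 0 1).indicator (fun _ => C) q := by
  have hind : 0 ≤ (Set.Icc 0 1).indicator (fun _ => C) q := Set.indicator_nonneg (fun _ _ => hC) q
  rcases lt_or_ge q 0 with hq | hq
  · rwa [riemannStep_of_neg hq, abs_zero]
  rcases eq_or_ne d 0 with rfl | hd
  · rwa [Nat.le_zero.mp hm, riemannStep, Finset.range_zero, Finset.sum_empty, abs_zero]
  rw [riemannStep_of_nonneg hd hq]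
  split_ifs with hqm
  · have hq1 : q ≤ 1 := by
      have : q * d < d := hqm.trans_le (by exact_mod_cast hm)
      have hd' : (0 : ℝ) < d := by positivity
      nlinarith
    rw [Set.indicator_of_mem (Set.mem_Icc.2 ⟨hq, hq1⟩)]
    exact hv _ ((Nat.floor_lt (mul_nonneg hq d.cast_nonneg)).2 hqm)
  · rwa [abs_zero]

end RiemannStep

lemma tendsto_riemannStep {v : ℕ → ℕ → ℝ} {m : ℕ → ℕ} {β : ℝ} {g : ℝ → ℝ} {q : ℝ}
    (hmβ : Tendsto (fun d => (m d : ℝ) / d) atTop (𝓝 β)) (hq0 : q ≠ 0) (hqβ : q ≠ β)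
    (hconv : q ∈ Set.Ioo 0 β → Tendsto (fun d => v d ⌊q * d⌋₊) atTop (𝓝 (g q))) :
    Tendsto (fun d => riemannStep d (m d) (v d) q) atTop (𝓝 ((Set.Ioo 0 β).indicator g q)) := by
  rcases hq0.lt_or_gt with hneg | hpos
  · simp_rw [riemannStep_of_neg hneg,
      Set.indicator_of_notMem (fun h : q ∈ Set.Ioo 0 β => h.1.not_gt hneg)]
    exact tendsto_const_nhds
  rcases hqβ.lt_or_gt with hlt | hgt
  · rw [Set.indicator_of_mem (Set.mem_Ioo.2 ⟨hpos, hlt⟩)]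
    refine (hconv ⟨hpos, hlt⟩).congr' ?_
    filter_upwards [hmβ.eventually (lt_mem_nhds hlt), eventually_ne_atTop 0] with d hd hd0
    rw [lt_div_iff₀ (by positivity)] at hd
    rw [riemannStep_of_nonneg hd0 hpos.le, if_pos hd]
  · rw [Set.indicator_of_notMem (fun h : q ∈ Set.Ioo 0 β => h.2.not_gt hgt)]
    refine tendsto_const_nhds.congr' ?_
    filter_upwards [hmβ.eventually (gt_mem_nhds hgt), eventually_ne_atTop 0] with d hd hd0
    rw [div_lt_iff₀ (by positivity)] at hd
    rw [riemannStep_of_nonneg hd0 hpos.le, if_neg hd.not_gt]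

theorem tendsto_riemannSum {v : ℕ → ℕ → ℝ} {m : ℕ → ℕ} {β C : ℝ} {g : ℝ → ℝ}
    (hm : ∀ d, m d ≤ d) (hmβ : Tendsto (fun d => (m d : ℝ) / d) atTop (𝓝 β)) (hC : 0 ≤ C)
    (hv : ∀ d j, j < m d → |v d j| ≤ C)
    (hconv : ∀ᵐ q, q ∈ Set.Ioo 0 β → Tendsto (fun d => v d ⌊q * d⌋₊) atTop (𝓝 (g q))) :
    Tendsto (fun d : ℕ => (1 / (d : ℝ)) * ∑ j ∈ Finset.range (m d), v d j) atTop
      (𝓝 (∫ q in (0 : ℝ)..β, g q)) := by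
  have hβ : 0 ≤ β := ge_of_tendsto' hmβ fun d => by positivity
  have hlim : ∀ᵐ q, Tendsto (fun d => riemannStep d (m d) (v d) q) atTop
      (𝓝 ((Set.Ioo 0 β).indicator g q)) := by
    filter_upwards [hconv, ((Set.countable_singleton β).insert (0 : ℝ)).ae_notMem volume]
      with q hq hq0β
    simp only [Set.mem_insert_iff, Set.mem_singleton_iff, not_or] at hq0β
    exact tendsto_riemannStep hmβ hq0β.1 hq0β.2 hq
  rw [intervalIntegral.integral_of_le hβ, integral_Ioc_eq_integral_Ioo,
    ← integral_indicator measurableSet_Ioo]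
  simp_rw [← integral_riemannStep]
  refine tendsto_integral_of_dominated_convergence _
    (fun d => measurable_riemannStep.aestronglyMeasurable) ?_
    (fun d => ae_of_all _ fun q => abs_riemannStep_le (hm d) hC (hv d)) hlim
  exact (integrable_indicator_iff measurableSet_Icc).2
    (integrableOn_const (by simp [Real.volume_Icc]))

lemma tendsto_natCast_sub_div {k : ℕ → ℕ} {α : ℝ} (hα : α < 1)
    (hk : Tendsto (fun d : ℕ => (k d : ℝ) / d) atTop (𝓝 α)) :
    Tendsto (fun d : ℕ => ((d - k d : ℕ) : ℝ) / d) atTop (𝓝 (1 - α)) := by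
  refine (tendsto_const_nhds.sub hk).congr' ?_
  filter_upwards [hk.eventually (gt_mem_nhds hα), eventually_ne_atTop 0] with d hd hd0
  have hd' : (0 : ℝ) < d := by positivity
  have hkd : k d ≤ d := by
    rw [div_lt_one hd'] at hd
    exact_mod_cast hd.le
  rw [Nat.cast_sub hkd, sub_div, div_self hd'.ne']

theorem stmt_3_general
    -- the triangular array of independent Bernoulli random variables
    {Ω : ℕ → Type*} [∀ d, MeasurableSpace (Ω d)]
    (μ : ∀ d, Measure (Ω d)) [∀ d, IsProbabilityMeasure (μ d)]
    (p : ℕ → ℕ → ℝ) (hp : ∀ d i, i < d → p d i ∈ Set.Icc (0 : ℝ) 1)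
    (X : ∀ d, ℕ → Ω d → ℝ)
    (hmeas : ∀ d i, Measurable (X d i))
    (hval : ∀ d i ω, X d i ω = 0 ∨ X d i ω = 1)
    (hbern : ∀ d i, i < d → μ d {ω | X d i ω = 1} = ENNReal.ofReal (p d i))
    -- transformed quantities
    (pstar : ℕ → ℕ → ℝ)
    (hpstar : ∀ d i, pstar d i = min (p d i) (1 - p d i))
    (Xstar : ∀ d, ℕ → Ω d → ℝ)
    (hXstar : ∀ d i ω,
      Xstar d i ω = if p d i ≤ 1 / 2 then X d i ω else 1 - X d i ω)
    -- an ordering of {0,…,d−1} making `pstar` nondecreasing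
    (ord : ℕ → ℕ → ℕ)
    (hord_bij : ∀ d, Set.BijOn (ord d) (Set.Iio d) (Set.Iio d))
    (hord_mono : ∀ d j j', j ≤ j' → j' < d →
      pstar d (ord d j) ≤ pstar d (ord d j'))
    -- the stability assumption
    (F : ℝ → ℝ)
    (hF_mono : MonotoneOn F (Set.Icc 0 1))
    (hstab : ∀ t ∈ Set.Icc (0 : ℝ) 1, ContinuousWithinAt F (Set.Icc 0 1) t →
      Tendsto (fun d : ℕ => (1 / (d : ℝ)) *
          ∑ i ∈ Finset.range d, (if p d i ≤ t then (1 : ℝ) else 0))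
        atTop (nhds (F t)))
    -- the transformed cdf and its quantile function
    (Fstar : ℝ → ℝ)
    (hFstar : ∀ t, Fstar t = if t ≤ 1 / 2 then F t + 1 - F (1 - t) else 1)
    (hFstar_mono : MonotoneOn Fstar (Set.Icc 0 1))
    (Qstar : ℝ → ℝ)
    (hQ : ∀ q, Qstar q = sInf {t | t ∈ Set.Icc (0 : ℝ) 1 ∧ q ≤ Fstar t})
    -- proportional bandwidth
    (k : ℕ → ℕ) (α : ℝ) (hα : α ∈ Set.Ioo (0 : ℝ) 1)
    (hk : Tendsto (fun d : ℕ => (k d : ℝ) / d) atTop (nhds α)) :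
    -- the normalized risk equals the deterministic sum …
    (∀ d : ℕ,
      (∫ ω, (1 / (d : ℝ)) * ∑ j ∈ Finset.range (d - k d),
          (Xstar d (ord d j) ω - pstar d (ord d j)) ^ 2 ∂(μ d))
        = (1 / (d : ℝ)) * ∑ j ∈ Finset.range (d - k d),
            pstar d (ord d j) * (1 - pstar d (ord d j))) ∧
    -- … and converges to the limiting integral
    Tendsto (fun d : ℕ => (1 / (d : ℝ)) * ∑ j ∈ Finset.range (d - k d),
        pstar d (ord d j) * (1 - pstar d (ord d j)))
      atTop (nhds (∫ q in (0 : ℝ)..(1 - α), Qstar q * (1 - Qstar q))) := by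
  have hord_lt : ∀ d j, j < d → ord d j < d := fun d j hj => (hord_bij d).mapsTo hj
  have hpstar_mem : ∀ d j, j < d → pstar d (ord d j) ∈ Set.Icc 0 (1 / 2) := fun d j hj =>
    hpstar d _ ▸ min_one_sub_mem_Icc (hp d _ (hord_lt d j hj))
  have hsub : ∀ d, ∀ j ∈ Finset.range (d - k d), ord d j < d := fun d j hj =>
    hord_lt d j ((Finset.mem_range.1 hj).trans_le (Nat.sub_le d (k d)))
  refine ⟨fun d => ?_, ?_⟩
  · simp_rw [hXstar, hpstar]
    exact integral_const_mul_sum_sq_fold_sub _ _ (fun j => hmeas d _) (fun j => hval d _)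
      (fun j hj => (hp d _ (hsub d j hj)).1) (fun j hj => hbern d _ (hsub d j hj))
  obtain rfl : Qstar = quantile Fstar := funext hQ
  have hFstar_half : Fstar (1 / 2) = 1 := by norm_num [hFstar]
  have hFstar_one : Fstar 1 = 1 := by norm_num [hFstar]
  have hT : ∀ l r : ℝ, 0 ≤ l → l < r → r ≤ 1 / 2 → ∃ t ∈ Set.Ioo l r,
      Tendsto (fun d => empiricalCDF d (fun j => pstar d (ord d j)) t) atTop (𝓝 (Fstar t)) := by
    intro l r hl hlr hr
    obtain ⟨t, ht, hlim⟩ := exists_tendsto_empiricalCDF_min_one_sub hF_mono hstab hl hlr hr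
    refine ⟨t, ht, ?_⟩
    rw [hFstar t, if_pos (ht.2.le.trans hr)]
    refine hlim.congr fun d => ?_
    rw [← empiricalCDF_comp_of_bijOn (hord_bij d)]
    simp only [Function.comp_def, hpstar]
  refine tendsto_riemannSum (fun d => Nat.sub_le d (k d)) (tendsto_natCast_sub_div hα.2 hk)
    zero_le_one (fun d j hj => abs_mul_one_sub_le_one
      (Set.Icc_subset_Icc_right (by norm_num) (hpstar_mem d j (hj.trans_le (Nat.sub_le _ _))))) ?_
  filter_upwards [countable_not_continuousWithinAt_quantile.ae_notMem volume] with q hq hqβ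
  have hq1 : q < 1 := hqβ.2.trans (by linarith [hα.1])
  have hc : ContinuousWithinAt (quantile Fstar) (Set.Ioi q) q :=
    not_not.1 fun h => hq ⟨by rwa [hFstar_one], h⟩
  exact ((continuous_id.mul (continuous_const.sub continuous_id)).tendsto _).comp
    (tendsto_sorted_apply_floor_quantile hord_mono hpstar_mem hFstar_mono hFstar_half hT
      ⟨hqβ.1, hq1⟩ hc)

theorem stmt_3
    -- the triangular array of independent Bernoulli random variables
    {Ω : ℕ → Type*} [∀ d, MeasurableSpace (Ω d)]
    (μ : ∀ d, Measure (Ω d)) [∀ d, IsProbabilityMeasure (μ d)]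
    (p : ℕ → ℕ → ℝ) (hp : ∀ d i, i < d → p d i ∈ Set.Icc (0 : ℝ) 1)
    (X : ∀ d, ℕ → Ω d → ℝ)
    (hmeas : ∀ d i, Measurable (X d i))
    (hval : ∀ d i ω, X d i ω = 0 ∨ X d i ω = 1)
    (hbern : ∀ d i, i < d → μ d {ω | X d i ω = 1} = ENNReal.ofReal (p d i))
    (hindep : ∀ d, iIndepFun
      (fun i : Fin d => X d (i : ℕ)) (μ d))
    -- transformed quantities
    (pstar : ℕ → ℕ → ℝ)
    (hpstar : ∀ d i, pstar d i = min (p d i) (1 - p d i))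
    (Xstar : ∀ d, ℕ → Ω d → ℝ)
    (hXstar : ∀ d i ω,
      Xstar d i ω = if p d i ≤ 1 / 2 then X d i ω else 1 - X d i ω)
    -- an ordering of {0,…,d−1} making `pstar` nondecreasing
    (ord : ℕ → ℕ → ℕ)
    (hord_bij : ∀ d, Set.BijOn (ord d) (Set.Iio d) (Set.Iio d))
    (hord_mono : ∀ d j j', j ≤ j' → j' < d →
      pstar d (ord d j) ≤ pstar d (ord d j'))
    -- the stability assumption
    (F : ℝ → ℝ)
    (hF_mono : MonotoneOn F (Set.Icc 0 1))
    (hF_rc : ∀ t ∈ Set.Ico (0 : ℝ) 1,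
      Tendsto F (nhdsWithin t (Set.Ioi t)) (nhds (F t)))
    (hF0 : Tendsto F (nhdsWithin 0 (Set.Ioi 0)) (nhds 0))
    (hF1 : Tendsto F (nhdsWithin 1 (Set.Iio 1)) (nhds 1))
    (hstab : ∀ t ∈ Set.Icc (0 : ℝ) 1, ContinuousWithinAt F (Set.Icc 0 1) t →
      Tendsto (fun d : ℕ => (1 / (d : ℝ)) *
          ∑ i ∈ Finset.range d, (if p d i ≤ t then (1 : ℝ) else 0))
        atTop (nhds (F t)))
    -- the transformed cdf and its quantile function
    (Fstar : ℝ → ℝ)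
    (hFstar : ∀ t, Fstar t = if t ≤ 1 / 2 then F t + 1 - F (1 - t) else 1)
    (hFstar_cont : ContinuousOn Fstar (Set.Icc 0 1))
    (hFstar_mono : MonotoneOn Fstar (Set.Icc 0 1))
    (Qstar : ℝ → ℝ)
    (hQ : ∀ q, Qstar q = sInf {t | t ∈ Set.Icc (0 : ℝ) 1 ∧ q ≤ Fstar t})
    -- proportional bandwidth
    (k : ℕ → ℕ) (α : ℝ) (hα : α ∈ Set.Ioo (0 : ℝ) 1)
    (hk : Tendsto (fun d : ℕ => (k d : ℝ) / d) atTop (nhds α)) :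
    -- the normalized risk equals the deterministic sum …
    (∀ d : ℕ,
      (∫ ω, (1 / (d : ℝ)) * ∑ j ∈ Finset.range (d - k d),
          (Xstar d (ord d j) ω - pstar d (ord d j)) ^ 2 ∂(μ d))
        = (1 / (d : ℝ)) * ∑ j ∈ Finset.range (d - k d),
            pstar d (ord d j) * (1 - pstar d (ord d j))) ∧
    -- … and converges to the limiting integral
    Tendsto (fun d : ℕ => (1 / (d : ℝ)) * ∑ j ∈ Finset.range (d - k d),
        pstar d (ord d j) * (1 - pstar d (ord d j)))
      atTop (nhds (∫ q in (0 : ℝ)..(1 - α), Qstar q * (1 - Qstar q))) :=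
  stmt_3_general μ p hp X hmeas hval hbern pstar hpstar Xstar hXstar ord hord_bij hord_mono F
    hF_mono hstab Fstar hFstar hFstar_mono Qstar hQ k α hα hk
end

section
/- Let B ≥ 1 be an odd integer and let X = (X₁, X₂) be uniform on {0,1} × {0,B}. Define the policy σ^S(x) = {1} if x₁ + x₂ is odd and σ^S(x) = {2} otherwise. Then: (i) σ^S is fully revealing for a sophisticated agent, i.e., the map x ↦ (σ^S(x), x_{σ^S(x)}) is injective on the support, so R^S(σ^S) = 0; (ii) the naive risk of σ^S is R^N(σ^S) = B²/8 + 1/8; (iii) every highlighting policy revealing at most one coordinate has naive risk at least 1/4, with the constant policy σ^N ≡ {2} attaining naive risk exactly 1/4; hence the price of complexity is Δ^N = R^N(σ^S) − R^N(σ^N) = (B² − 1)/8. -/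
/-!
A naive agent shown one coordinate predicts the hidden one by its marginal mean, since the
coordinates are independent, and so pays that coordinate's variance: `1/4` for `X₁`, `B²/4`
for `X₂`. Every policy revealing at most one coordinate therefore pays at least `1/4` in each
state, exactly what revealing `X₂` always costs. The parity policy hides `X₁` in two states and
`X₂` in the other two, so its naive risk is the average `(1/4 + B²/4)/2`. A sophisticated agent,
by contrast, learns the parity of `x₁ + x₂` from which coordinate is shown; for odd `B` this
determines the hidden coordinate, so the signal is injective and the sophisticated risk is zero.
-/

open Finset
open scoped Classical

noncomputable section

/-- The support of the uniform prior: the four states of `{0,1} × {0,B}`. -/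
def supp16 (B : ℝ) : Finset (ℝ × ℝ) := {(0, 0), (0, B), (1, 0), (1, B)}

/-- Coordinates of an instance. -/
def coord16 (j : Fin 2) (x : ℝ × ℝ) : ℝ := if j = 0 then x.1 else x.2

/-- The signal `(I, x_I)` sent by a policy at instance `x` (unrevealed
coordinates are zeroed out; the index set is part of the signal). -/
def sig16 (pol : ℝ × ℝ → Finset (Fin 2)) (x : ℝ × ℝ) :
    Finset (Fin 2) × (Fin 2 → ℝ) :=
  (pol x, fun j => if j ∈ pol x then coord16 j x else 0)

/-- Naive conditional mean `E[X_j | X_I = x_I]` under the uniform prior on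
`supp16 B`. -/
def condMean16 (B : ℝ) (I : Finset (Fin 2)) (x : ℝ × ℝ) (j : Fin 2) : ℝ :=
  (∑ y ∈ (supp16 B).filter (fun y => ∀ i ∈ I, coord16 i y = coord16 i x),
      coord16 j y) /
    (((supp16 B).filter (fun y => ∀ i ∈ I, coord16 i y = coord16 i x)).card : ℝ)

/-- Naive prediction: revealed coordinates at face value, unrevealed ones by
their conditional mean given only the revealed values. -/
def predN16 (B : ℝ) (pol : ℝ × ℝ → Finset (Fin 2)) (x : ℝ × ℝ) (j : Fin 2) : ℝ :=
  if j ∈ pol x then coord16 j x else condMean16 B (pol x) x j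

/-- Expected naive loss (squared recovery) under the uniform prior. -/
def RN16 (B : ℝ) (pol : ℝ × ℝ → Finset (Fin 2)) : ℝ :=
  (1 / 4) * ∑ x ∈ supp16 B, ∑ j : Fin 2, (coord16 j x - predN16 B pol x j) ^ 2

/-- Sophisticated prediction: the posterior mean over states producing the
same signal (conditioning on the selection event `σ(X) = I` as well as the
revealed values). -/
def predS16 (B : ℝ) (pol : ℝ × ℝ → Finset (Fin 2)) (x : ℝ × ℝ) (j : Fin 2) : ℝ :=
  (∑ y ∈ (supp16 B).filter (fun y => sig16 pol y = sig16 pol x), coord16 j y) /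
    (((supp16 B).filter (fun y => sig16 pol y = sig16 pol x)).card : ℝ)

/-- Expected sophisticated loss (squared recovery) under the uniform prior. -/
def RS16 (B : ℝ) (pol : ℝ × ℝ → Finset (Fin 2)) : ℝ :=
  (1 / 4) * ∑ x ∈ supp16 B, ∑ j : Fin 2, (coord16 j x - predS16 B pol x j) ^ 2

/-- The parity policy: reveal coordinate 1 if `x₁ + x₂` is odd, else
coordinate 2. -/
def sophPol16 (x : ℝ × ℝ) : Finset (Fin 2) :=
  if ∃ m : ℤ, x.1 + x.2 = 2 * (m : ℝ) + 1 then {0} else {1}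

@[simp] lemma coord16_zero (x : ℝ × ℝ) : coord16 0 x = x.1 := rfl

@[simp] lemma coord16_one (x : ℝ × ℝ) : coord16 1 x = x.2 := rfl

lemma Int.ne_zero_of_odd {b : ℤ} (hb : Odd b) : b ≠ 0 := by
  rintro rfl
  simp at hb

lemma sum_supp16 {B : ℝ} (hB : B ≠ 0) (f : ℝ × ℝ → ℝ) :
    ∑ x ∈ supp16 B, f x = f (0, 0) + f (0, B) + f (1, 0) + f (1, B) := by
  rw [supp16, sum_insert (by simp [hB.symm]), sum_insert (by simp),
    sum_insert (by simp [hB.symm]), sum_singleton]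
  ring

lemma mem_supp16 {B : ℝ} {x : ℝ × ℝ} :
    x ∈ supp16 B ↔ (x.1 = 0 ∨ x.1 = 1) ∧ (x.2 = 0 ∨ x.2 = B) := by
  obtain ⟨a, c⟩ := x
  simp only [supp16, mem_insert, mem_singleton, Prod.mk.injEq]
  tauto

lemma condMean16_eq (B : ℝ) (I : Finset (Fin 2)) (x : ℝ × ℝ) (j : Fin 2) :
    condMean16 B I x j =
      (∑ y ∈ supp16 B, if ∀ i ∈ I, coord16 i y = coord16 i x then coord16 j y else 0) /
        ∑ y ∈ supp16 B, if ∀ i ∈ I, coord16 i y = coord16 i x then (1 : ℝ) else 0 := by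
  rw [condMean16, sum_filter, card_filter, Nat.cast_sum]
  push_cast
  rfl

/-- `X₁` and `X₂` are independent, so conditioning on one never moves the mean of the other. -/
lemma condMean16_of_notMem {B : ℝ} (hB : B ≠ 0) {I : Finset (Fin 2)} {x : ℝ × ℝ}
    (hx : x ∈ supp16 B) {j : Fin 2} (hj : j ∉ I) :
    condMean16 B I x j = coord16 j (1 / 2, B / 2) := by
  have hI : ∀ s : Finset (Fin 2), s = ∅ ∨ s = {0} ∨ s = {1} ∨ s = {0, 1} := by decide
  rw [condMean16_eq, sum_supp16 hB, sum_supp16 hB]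
  obtain ⟨h1 | h1, h2 | h2⟩ := mem_supp16.1 hx <;>
    rcases hI I with rfl | rfl | rfl | rfl <;> fin_cases j <;>
    simp_all [hB.symm] <;> ring

def naiveLoss16 (B : ℝ) (I : Finset (Fin 2)) (x : ℝ × ℝ) : ℝ :=
  ∑ j : Fin 2, (coord16 j x - if j ∈ I then coord16 j x else condMean16 B I x j) ^ 2

lemma RN16_eq_sum_naiveLoss16 (B : ℝ) (pol : ℝ × ℝ → Finset (Fin 2)) :
    RN16 B pol = 1 / 4 * ∑ x ∈ supp16 B, naiveLoss16 B (pol x) x := rfl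

lemma naiveLoss16_eq {B : ℝ} (hB : B ≠ 0) (I : Finset (Fin 2)) {x : ℝ × ℝ}
    (hx : x ∈ supp16 B) :
    naiveLoss16 B I x = (if 0 ∈ I then 0 else 1 / 4) + (if 1 ∈ I then 0 else B ^ 2 / 4) := by
  obtain ⟨h1 | h1, h2 | h2⟩ := mem_supp16.1 hx <;>
    simp only [naiveLoss16, Fin.sum_univ_two] <;>
    split_ifs <;>
    simp [condMean16_of_notMem hB hx, *] <;> ring

lemma RN16_eq {B : ℝ} (hB : B ≠ 0) (pol : ℝ × ℝ → Finset (Fin 2)) :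
    RN16 B pol = 1 / 4 * ∑ x ∈ supp16 B,
      ((if 0 ∈ pol x then 0 else 1 / 4) + (if 1 ∈ pol x then 0 else B ^ 2 / 4)) := by
  rw [RN16_eq_sum_naiveLoss16]
  congr 1
  exact sum_congr rfl fun x hx => naiveLoss16_eq hB (pol x) hx

lemma one_quarter_le_naiveLoss16 {B : ℝ} (hB : 1 ≤ B ^ 2) {I : Finset (Fin 2)}
    (hI : I.card ≤ 1) {x : ℝ × ℝ} (hx : x ∈ supp16 B) : 1 / 4 ≤ naiveLoss16 B I x := by
  have hB0 : B ≠ 0 := by rintro rfl; norm_num at hB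
  have hnot : ¬ (0 ∈ I ∧ 1 ∈ I) := by
    rintro ⟨h0, h1⟩
    have := card_le_card (insert_subset h0 (singleton_subset_iff.2 h1))
    simp at this
    omega
  rw [naiveLoss16_eq hB0 I hx]
  split_ifs <;> first | tauto | linarith

lemma one_quarter_le_RN16 {B : ℝ} (hB : 1 ≤ B ^ 2) (pol : ℝ × ℝ → Finset (Fin 2))
    (hpol : ∀ x, (pol x).card ≤ 1) : 1 / 4 ≤ RN16 B pol := by
  have hB0 : B ≠ 0 := by rintro rfl; norm_num at hB
  have h := fun x hx => one_quarter_le_naiveLoss16 hB (hpol x) (x := x) hx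
  rw [RN16_eq_sum_naiveLoss16, sum_supp16 hB0]
  linarith [h _ (by simp [supp16] : ((0 : ℝ), (0 : ℝ)) ∈ supp16 B), h (0, B) (by simp [supp16]),
    h (1, 0) (by simp [supp16]), h (1, B) (by simp [supp16])]

lemma predS16_of_injOn {B : ℝ} {pol : ℝ × ℝ → Finset (Fin 2)}
    (h : Set.InjOn (sig16 pol) (supp16 B)) {x : ℝ × ℝ} (hx : x ∈ supp16 B) (j : Fin 2) :
    predS16 B pol x j = coord16 j x := by
  have : (supp16 B).filter (fun y => sig16 pol y = sig16 pol x) = {x} := by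
    ext y
    simp only [mem_filter, mem_singleton]
    exact ⟨fun ⟨hy, hxy⟩ => h hy hx hxy, by rintro rfl; exact ⟨hx, rfl⟩⟩
  simp [predS16, this]

lemma RS16_eq_zero_of_injOn {B : ℝ} {pol : ℝ × ℝ → Finset (Fin 2)}
    (h : Set.InjOn (sig16 pol) (supp16 B)) : RS16 B pol = 0 := by
  rw [RS16, sum_eq_zero fun x hx => ?_, mul_zero]
  simp [predS16_of_injOn h hx]

lemma sophPol16_intCast (m n : ℤ) :
    sophPol16 (m, n) = if Odd (m + n) then {0} else {1} := by
  have : (∃ k : ℤ, (m : ℝ) + n = 2 * k + 1) ↔ Odd (m + n) := by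
    simp only [Odd]; norm_cast
  simp only [sophPol16, this]

lemma sophPol16_zero_zero : sophPol16 (0, 0) = {1} := by
  simpa using sophPol16_intCast 0 0

lemma sophPol16_one_zero : sophPol16 (1, 0) = {0} := by
  simpa using sophPol16_intCast 1 0

lemma sophPol16_zero_odd {b : ℤ} (hb : Odd b) : sophPol16 (0, b) = {0} := by
  simpa [hb] using sophPol16_intCast 0 b

lemma sophPol16_one_odd {b : ℤ} (hb : Odd b) : sophPol16 (1, b) = {1} := by
  simpa [Int.odd_add, Int.not_even_iff_odd.2 hb] using sophPol16_intCast 1 b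

/-- A sophisticated agent reads the parity of `x₁ + x₂` off which coordinate is revealed;
as `B` is odd, that parity and the revealed value determine the hidden coordinate. -/
def decodeSoph16 (B : ℝ) (s : Finset (Fin 2) × (Fin 2 → ℝ)) : ℝ × ℝ :=
  if s.1 = {0} then (s.2 0, if s.2 0 = 0 then B else 0)
  else (if s.2 1 = 0 then 0 else 1, s.2 1)

lemma leftInvOn_decodeSoph16 {b : ℤ} (hb : Odd b) :
    Set.LeftInvOn (decodeSoph16 b) (sig16 sophPol16) (supp16 b) := by
  have hb0 : (b : ℝ) ≠ 0 := Int.cast_ne_zero.2 (Int.ne_zero_of_odd hb)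
  intro x hx
  obtain ⟨h1 | h1, h2 | h2⟩ := mem_supp16.1 (Finset.mem_coe.1 hx) <;>
    obtain ⟨x1, x2⟩ := x <;> simp only at h1 h2 <;> subst h1 h2 <;>
    simp [decodeSoph16, sig16, sophPol16_zero_zero, sophPol16_one_zero,
      sophPol16_zero_odd hb, sophPol16_one_odd hb, hb0]

theorem stmt_16_general (b : ℤ) (hodd : Odd b) :
    -- (i) fully revealing for a sophisticated agent, hence zero risk
    Set.InjOn (sig16 sophPol16) ↑(supp16 (b : ℝ)) ∧
    RS16 (b : ℝ) sophPol16 = 0 ∧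
    -- (ii) naive risk of the parity policy
    RN16 (b : ℝ) sophPol16 = (b : ℝ) ^ 2 / 8 + 1 / 8 ∧
    -- (iii) every policy revealing at most one coordinate has naive risk ≥ 1/4,
    -- attained by the constant policy revealing coordinate 2
    (∀ pol : ℝ × ℝ → Finset (Fin 2), (∀ x, (pol x).card ≤ 1) →
      1 / 4 ≤ RN16 (b : ℝ) pol) ∧
    RN16 (b : ℝ) (fun _ => {1}) = 1 / 4 ∧
    RN16 (b : ℝ) sophPol16 - RN16 (b : ℝ) (fun _ => {1})
      = ((b : ℝ) ^ 2 - 1) / 8 := by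
  have hb0 : (b : ℝ) ≠ 0 := Int.cast_ne_zero.2 (Int.ne_zero_of_odd hodd)
  have hb1 : (1 : ℝ) ≤ (b : ℝ) ^ 2 :=
    mod_cast (one_le_sq_iff_one_le_abs _).2 (Int.one_le_abs (Int.ne_zero_of_odd hodd))
  have hinj : Set.InjOn (sig16 sophPol16) ↑(supp16 (b : ℝ)) :=
    (leftInvOn_decodeSoph16 hodd).injOn
  have hsoph : RN16 (b : ℝ) sophPol16 = (b : ℝ) ^ 2 / 8 + 1 / 8 := by
    rw [RN16_eq hb0, sum_supp16 hb0]
    simp [sophPol16_zero_zero, sophPol16_one_zero, sophPol16_zero_odd hodd,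
      sophPol16_one_odd hodd]
    ring
  have hconst : RN16 (b : ℝ) (fun _ => {1}) = 1 / 4 := by
    rw [RN16_eq hb0, sum_supp16 hb0]
    norm_num
  exact ⟨hinj, RS16_eq_zero_of_injOn hinj, hsoph, fun pol => one_quarter_le_RN16 hb1 pol,
    hconst, by rw [hsoph, hconst]; ring⟩

theorem stmt_16 (b : ℤ) (hodd : Odd b) (hb : 1 ≤ b) :
    -- (i) fully revealing for a sophisticated agent, hence zero risk
    Set.InjOn (sig16 sophPol16) ↑(supp16 (b : ℝ)) ∧
    RS16 (b : ℝ) sophPol16 = 0 ∧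
    -- (ii) naive risk of the parity policy
    RN16 (b : ℝ) sophPol16 = (b : ℝ) ^ 2 / 8 + 1 / 8 ∧
    -- (iii) every policy revealing at most one coordinate has naive risk ≥ 1/4,
    -- attained by the constant policy revealing coordinate 2
    (∀ pol : ℝ × ℝ → Finset (Fin 2), (∀ x, (pol x).card ≤ 1) →
      1 / 4 ≤ RN16 (b : ℝ) pol) ∧
    RN16 (b : ℝ) (fun _ => {1}) = 1 / 4 ∧
    RN16 (b : ℝ) sophPol16 - RN16 (b : ℝ) (fun _ => {1})
      = ((b : ℝ) ^ 2 - 1) / 8 :=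
  stmt_16_general b hodd

end
end
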